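/- arXiv:0706.0417 — 6 statements merged into one kernel-verified Lean document; each statement's English description precedes it below -/
import Mathlib

section
/- Let G be a finite cyclic group and M a G-module such that H^1(G, M) is trivial (multiplicative notation). Then the Tate cohomology group H^{-1}(G, M) is trivial, i.e., the kernel of the norm map N_G : M → M, x ↦ ∏_{g∈G} g(x), equals the augmentation submodule I_G M generated by the elements g(x)/x for g ∈ G and x ∈ M. -/
/-!
Fix a generator `σ` of `G`, of order `n`. An element `x` of norm `1` is the value at `σ` of the
1-cocycle `σ ^ k ↦ x · σ x ⋯ σ^(k-1) x`: this partial norm is well defined on `G` precisely because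
its value at `k = n` is the norm of `x`, which is `1`. Since `H^1(G, M) = 0`, the cocycle is a
coboundary `g ↦ g m / m`, and so `x = σ m / m` lies in `I_G M`.
-/

open Finset

section PartialNorm

variable {G M : Type*}

def partialNorm [Monoid G] [CommMonoid M] [MulDistribMulAction G M] (σ : G) (x : M) (k : ℕ) :
    M :=
  ∏ i ∈ range k, σ ^ i • x

section Monoid

variable [Monoid G] [CommMonoid M] [MulDistribMulAction G M] (σ : G) (x : M)

@[simp]
lemma partialNorm_one : partialNorm σ x 1 = x := by
  simp [partialNorm]

lemma partialNorm_add (a b : ℕ) :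
    partialNorm σ x (a + b) = partialNorm σ x a * σ ^ a • partialNorm σ x b := by
  simp only [partialNorm, prod_range_add, smul_prod', smul_smul, ← pow_add]

variable {σ x}

lemma partialNorm_orderOf_mul (h : partialNorm σ x (orderOf σ) = 1) (q : ℕ) :
    partialNorm σ x (orderOf σ * q) = 1 := by
  induction q with
  | zero => simp [partialNorm]
  | succ q ih =>
    rw [Nat.mul_succ, partialNorm_add, ih, h, smul_one, one_mul]

lemma partialNorm_mod_orderOf (h : partialNorm σ x (orderOf σ) = 1) (k : ℕ) :
    partialNorm σ x k = partialNorm σ x (k % orderOf σ) := by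
  conv_lhs => rw [← Nat.mod_add_div k (orderOf σ)]
  rw [partialNorm_add, partialNorm_orderOf_mul h, smul_one, mul_one]

end Monoid

variable [Group G] [CommGroup M] [MulDistribMulAction G M] {σ : G} {x : M}

lemma partialNorm_eq_of_pow_eq (h : partialNorm σ x (orderOf σ) = 1) {a b : ℕ}
    (hab : σ ^ a = σ ^ b) : partialNorm σ x a = partialNorm σ x b := by
  rw [partialNorm_mod_orderOf h a, partialNorm_mod_orderOf h b, pow_eq_pow_iff_modEq.mp hab]

lemma prod_smul_eq_partialNorm_orderOf [Fintype G] (hσ : ∀ g : G, g ∈ Subgroup.zpowers σ) :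
    ∏ g : G, g • x = partialNorm σ x (orderOf σ) := by
  classical
  rw [← IsCyclic.image_range_orderOf hσ, prod_image]
  · rfl
  · intro i hi j hj hij
    exact pow_injOn_Iio_orderOf (by simpa using hi) (by simpa using hj) hij

lemma exists_cocycle_apply_generator_eq [Finite G] (hσ : ∀ g : G, g ∈ Subgroup.zpowers σ)
    (h : partialNorm σ x (orderOf σ) = 1) :
    ∃ f : G → M, (∀ g g' : G, f (g * g') = f g * g • f g') ∧ f σ = x := by
  have hpow : ∀ g : G, ∃ k : ℕ, σ ^ k = g := fun g ↦
    (Submonoid.mem_powers_iff g σ).mp (mem_powers_iff_mem_zpowers.mpr (hσ g))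
  choose k hk using hpow
  refine ⟨fun g ↦ partialNorm σ x (k g), fun g g' ↦ ?_, ?_⟩
  · dsimp only
    have hmul : σ ^ k (g * g') = σ ^ (k g + k g') := by rw [hk, pow_add, hk, hk]
    rw [partialNorm_eq_of_pow_eq h hmul, partialNorm_add, hk]
  · dsimp only
    rw [partialNorm_eq_of_pow_eq h (b := 1) (by rw [hk, pow_one]), partialNorm_one]

end PartialNorm

/-- If `G` is a finite cyclic group and `M` a `G`-module (written multiplicatively) such that
`H^1(G, M)` is trivial (every 1-cocycle is a coboundary), then `H^{-1}(G, M)` is trivial: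
the kernel of the norm map `N_G : M → M` equals the augmentation submodule `I_G M`. -/
theorem stmt0 {G M : Type*} [Group G] [IsCyclic G] [Fintype G] [CommGroup M]
    [MulDistribMulAction G M]
    (hH1 : ∀ f : G → M, (∀ g h : G, f (g * h) = f g * g • f h) →
      ∃ m : M, ∀ g : G, f g = g • m / m)
    (x : M) (hx : ∏ g : G, g • x = 1) :
    x ∈ Subgroup.closure {y : M | ∃ (g : G) (m : M), y = g • m / m} := by
  obtain ⟨σ, hσ⟩ := IsCyclic.exists_generator (α := G)
  have hnorm : partialNorm σ x (orderOf σ) = 1 := by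
    rw [← prod_smul_eq_partialNorm_orderOf hσ, hx]
  obtain ⟨f, hf, hfσ⟩ := exists_cocycle_apply_generator_eq hσ hnorm
  obtain ⟨m, hm⟩ := hH1 f hf
  exact Subgroup.subset_closure ⟨σ, m, by rw [← hfσ, hm]⟩
end

section
/- Let G be a finite group, H a normal subgroup, and M a G-module (multiplicative). If the kernel of N_G on M equals I_G M (i.e. H^{-1}(G,M) = 1), then the kernel of N_{G/H} on the G/H-module N_H(M) equals I_{G/H} N_H(M) (i.e. H^{-1}(G/H, N_H(M)) = 1). -/
/-- The equivalence `(G ⧸ H) × H ≃ G` sending `(q, h)` to `q.out * h`. -/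
noncomputable def quotProdEquiv {G : Type*} [Group G] (H : Subgroup G) :
    (G ⧸ H) × H ≃ G where
  toFun p := p.1.out * p.2
  invFun g := (QuotientGroup.mk g,
    ⟨(QuotientGroup.mk g : G ⧸ H).out⁻¹ * g, by
      rw [← QuotientGroup.eq]
      simp [QuotientGroup.out_eq']⟩)
  left_inv := by
    rintro ⟨q, h, hh⟩
    have h1 : (QuotientGroup.mk (q.out * h) : G ⧸ H) = q := by
      rw [QuotientGroup.mk_mul_of_mem _ hh]
      simp [QuotientGroup.out_eq']
    ext
    · exact h1
    · simp [h1]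
  right_inv g := by simp

/-- If `H^{-1}(G, M) = 1` (the kernel of `N_G` equals `I_G M`), then for the `G/H`-module
`N_H(M)` one has `H^{-1}(G/H, N_H(M)) = 1`: every element of `N_H(M)` killed by the norm of
`G/H` lies in the augmentation submodule `I_{G/H} N_H(M)`. -/
theorem stmt3 {G M : Type*} [Group G] [Fintype G] [CommGroup M] [MulDistribMulAction G M]
    (H : Subgroup G) [H.Normal] [Fintype H] [Fintype (G ⧸ H)]
    (hGM : ∀ x : M, ∏ g : G, g • x = 1 →
      x ∈ Subgroup.closure {y : M | ∃ (g : G) (m : M), y = g • m / m})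
    (y : M) (hy : ∃ x : M, y = ∏ h : H, (h : G) • x)
    (hny : ∏ q : G ⧸ H, q.out • y = 1) :
    y ∈ Subgroup.closure
      {z : M | ∃ (g : G) (m : M),
        z = g • (∏ h : H, (h : G) • m) / ∏ h : H, (h : G) • m} := by
  classical
  obtain ⟨x, rfl⟩ := hy
  -- the norm map of `H` as a monoid hom
  let ν : M →* M := ∏ h : H, MulDistribMulAction.toMonoidHom M (h : G)
  have hν : ∀ m : M, ν m = ∏ h : H, (h : G) • m := by
    intro m
    simp [ν, Finset.prod_apply]
  have hcomm : ∀ (g : G) (m : M), ∏ h : H, (h : G) • (g • m) = g • ∏ h : H, (h : G) • m := by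
    intro g m
    rw [Finset.smul_prod']
    simp only [smul_smul]
    refine Fintype.prod_equiv (MulAut.conjNormal g⁻¹ : H ≃* H).toEquiv _ _ ?_
    intro h
    simp [MulAut.conjNormal_apply, mul_assoc]
  -- the norm over `G` of `x` is trivial
  have hx : ∏ g : G, g • x = 1 := by
    rw [← hny]
    calc ∏ g : G, g • x
        = ∏ p : (G ⧸ H) × H, (p.1.out * (p.2 : G)) • x :=
          (Fintype.prod_equiv (quotProdEquiv H) _ _ fun p => rfl).symm
      _ = ∏ q : G ⧸ H, ∏ h : H, (q.out * (h : G)) • x := Fintype.prod_prod_type _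
      _ = ∏ q : G ⧸ H, q.out • ∏ h : H, (h : G) • x := by
          simp [Finset.smul_prod', smul_smul]
  have hmem := hGM x hx
  have key : ν x ∈ Subgroup.closure
      {z : M | ∃ (g : G) (m : M),
        z = g • (∏ h : H, (h : G) • m) / ∏ h : H, (h : G) • m} := by
    have h1 : ν x ∈ (Subgroup.closure {y : M | ∃ (g : G) (m : M), y = g • m / m}).map ν :=
      Subgroup.mem_map_of_mem ν hmem
    rw [MonoidHom.map_closure] at h1
    refine Subgroup.closure_mono ?_ h1
    rintro z ⟨w, ⟨g, m, rfl⟩, rfl⟩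
    refine ⟨g, m, ?_⟩
    rw [map_div, hν, hν, hcomm]
  rw [hν] at key
  exact key
end

section
/- Let G be a finite group and H a normal cyclic subgroup of G, and M a G-module with H^1(H, M) trivial (so that ker N_H = I_H M on M). If H^{-1}(G/H, N_H(M)) is trivial, then H^{-1}(G, M) is trivial. -/
open Finset

section Aux

variable {G M : Type*} [Group G] [CommGroup M] [MulDistribMulAction G M]

/-- The norm of a normal subgroup commutes with smul, up to conjugation reindexing. -/
private lemma norm_smul_comm (H : Subgroup G) [H.Normal] [Fintype H] (g : G) (m : M) :
    g • (∏ h : H, (h : G) • m) = ∏ h : H, (h : G) • (g • m) := by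
  have h1 : g • (∏ h : H, (h : G) • m) = ∏ h : H, (g * (h : G)) • m := by
    rw [Finset.smul_prod']
    exact Finset.prod_congr rfl fun h _ => (mul_smul g (h : G) m).symm
  have h2 : (∏ h : H, ((h : G) * g) • m) = ∏ h : H, (h : G) • (g • m) :=
    Finset.prod_congr rfl fun h _ => mul_smul (h : G) g m
  rw [h1, ← h2]
  -- reindex by conjugation
  let φ : H ≃ H :=
    { toFun := fun h => ⟨g * (h : G) * g⁻¹, Subgroup.Normal.conj_mem ‹H.Normal› _ h.2 g⟩
      invFun := fun h => ⟨g⁻¹ * (h : G) * g, by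
        simpa using Subgroup.Normal.conj_mem ‹H.Normal› _ h.2 g⁻¹⟩
      left_inv := fun h => Subtype.ext (by simp [mul_assoc])
      right_inv := fun h => Subtype.ext (by simp [mul_assoc]) }
  refine Fintype.prod_equiv φ _ _ fun h => ?_
  show (g * (h : G)) • m = ((φ h : G) * g) • m
  symm
  congr 1
  show g * (h : G) * g⁻¹ * g = g * (h : G)
  group

/-- If `H^1(H,M)` vanishes and `H` is cyclic, the kernel of the norm is contained
in the augmentation generators. -/
private lemma ker_norm (H : Subgroup G) [IsCyclic H] [Fintype H]
    (hH1 : ∀ f : H → M, (∀ a b : H, f (a * b) = f a * (a : G) • f b) →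
      ∃ m : M, ∀ a : H, f a = (a : G) • m / m)
    (z : M) (hz : ∏ h : H, (h : G) • z = 1) :
    ∃ (g : G) (m : M), z = g • m / m := by
  classical
  obtain ⟨h₀, hh₀⟩ := IsCyclic.exists_generator (α := H)
  set n := orderOf h₀ with hn
  have hrep : ∀ a : H, ∃ i : ℕ, h₀ ^ i = a := fun a => by
    have : a ∈ Submonoid.powers h₀ :=
      ((isOfFinOrder_of_finite h₀).mem_powers_iff_mem_zpowers).mpr (hh₀ a)
    obtain ⟨i, hi⟩ := this
    exact ⟨i, hi⟩
  -- the partial norms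
  set F : ℕ → M := fun i => ∏ j ∈ Finset.range i, ((h₀ : G)) ^ j • z with hF
  have hNz : ∏ j ∈ Finset.range n, ((h₀ : G)) ^ j • z = 1 := by
    rw [← hz]
    refine Finset.prod_bij (fun j _ => h₀ ^ j) (fun j _ => Finset.mem_univ _)
      (fun i hi j hj hij => ?_) (fun a _ => ?_) (fun j _ => ?_)
    · exact pow_injOn_Iio_orderOf (Finset.mem_range.mp hi) (Finset.mem_range.mp hj) hij
    · obtain ⟨i, hi⟩ := hrep a
      exact ⟨i % n, Finset.mem_range.mpr (Nat.mod_lt _ (orderOf_pos h₀)),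
        by show h₀ ^ (i % n) = a; rw [hn, pow_mod_orderOf]; exact hi⟩
    · norm_cast
  have hFadd : ∀ i k : ℕ, F (i + k) = F i * (h₀ : G) ^ i • F k := by
    intro i k
    rw [hF]
    simp only [Finset.prod_range_add]
    congr 1
    rw [Finset.smul_prod']
    exact Finset.prod_congr rfl fun j _ => by rw [pow_add, mul_smul]
  have hFn : ∀ i : ℕ, F (i + n) = F i := by
    intro i
    rw [hFadd]
    have : F n = 1 := hNz
    rw [this, smul_one, mul_one]
  have hFcongr : ∀ i i' : ℕ, h₀ ^ i = h₀ ^ i' → F i = F i' := by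
    have key : ∀ i k : ℕ, F (i + n * k) = F i := by
      intro i k
      induction k with
      | zero => simp
      | succ k ih => rw [Nat.mul_succ, ← Nat.add_assoc, hFn, ih]
    intro i i' hii'
    rcases le_total i i' with h | h
    · have hmod : i ≡ i' [MOD n] := pow_eq_pow_iff_modEq.mp hii'
      obtain ⟨k, hk⟩ := (Nat.modEq_iff_dvd' h).mp hmod
      have : i' = i + n * k := by omega
      rw [this, key]
    · have hmod : i' ≡ i [MOD n] := pow_eq_pow_iff_modEq.mp hii'.symm
      obtain ⟨k, hk⟩ := (Nat.modEq_iff_dvd' h).mp hmod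
      have : i = i' + n * k := by omega
      rw [this, key]
  -- the cocycle
  set f : H → M := fun a => F (hrep a).choose with hf
  have hfF : ∀ (a : H) (i : ℕ), h₀ ^ i = a → f a = F i := by
    intro a i hi
    exact hFcongr _ _ (by rw [(hrep a).choose_spec, hi])
  have hcocycle : ∀ a b : H, f (a * b) = f a * (a : G) • f b := by
    intro a b
    obtain ⟨i, hi⟩ := hrep a
    obtain ⟨j, hj⟩ := hrep b
    rw [hfF a i hi, hfF b j hj, hfF (a * b) (i + j) (by rw [pow_add, hi, hj]), hFadd]
    congr 2
    rw [← hi]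
    norm_cast
  obtain ⟨m, hm⟩ := hH1 f hcocycle
  refine ⟨(h₀ : G), m, ?_⟩
  have h1 : f h₀ = F 1 := hfF h₀ 1 (pow_one h₀)
  have h2 : F 1 = z := by simp [hF]
  rw [← h2, ← h1, hm h₀]

end Aux

/-- If `H` is a normal cyclic subgroup of the finite group `G`, `M` a `G`-module with
`H^1(H, M)` trivial (so that `ker N_H = I_H M`), and `H^{-1}(G/H, N_H(M))` is trivial,
then `H^{-1}(G, M)` is trivial. -/
theorem stmt4 {G M : Type*} [Group G] [Fintype G] [CommGroup M] [MulDistribMulAction G M]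
    (H : Subgroup G) [H.Normal] [IsCyclic H] [Fintype H] [Fintype (G ⧸ H)]
    (hH1 : ∀ f : H → M, (∀ a b : H, f (a * b) = f a * (a : G) • f b) →
      ∃ m : M, ∀ a : H, f a = (a : G) • m / m)
    (hquot : ∀ y : M, (∃ x : M, y = ∏ h : H, (h : G) • x) →
      (∏ q : G ⧸ H, q.out • y = 1) →
      y ∈ Subgroup.closure
        {z : M | ∃ (g : G) (m : M),
          z = g • (∏ h : H, (h : G) • m) / ∏ h : H, (h : G) • m})
    (x : M) (hx : ∏ g : G, g • x = 1) :
    x ∈ Subgroup.closure {y : M | ∃ (g : G) (m : M), y = g • m / m} := by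
  classical
  -- the norm as a monoid hom
  set NH : M →* M :=
    { toFun := fun m => ∏ h : H, (h : G) • m
      map_one' := by simp
      map_mul' := fun a b => by
        rw [← Finset.prod_mul_distrib]
        exact Finset.prod_congr rfl fun h _ => smul_mul' _ _ _ } with hNH
  set S : Set M := {y : M | ∃ (g : G) (m : M), y = g • m / m} with hS
  -- coset decomposition of the full norm
  have hdecomp : ∏ q : G ⧸ H, q.out • (NH x) = ∏ g : G, g • x := by
    let e : (G ⧸ H) × H ≃ G :=
      { toFun := fun p => p.1.out * (p.2 : G)
        invFun := fun g => (QuotientGroup.mk g,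
          ⟨(QuotientGroup.mk g : G ⧸ H).out⁻¹ * g, by
            rw [← QuotientGroup.eq, QuotientGroup.out_eq']⟩)
        left_inv := fun p => by
          have hq : (QuotientGroup.mk (p.1.out * (p.2 : G)) : G ⧸ H) = p.1 := by
            rw [QuotientGroup.mk_mul_of_mem _ p.2.2, QuotientGroup.out_eq']
          ext
          · exact hq
          · simp only [hq]
            group
        right_inv := fun g => by
          simp only []
          rw [mul_inv_cancel_left] }
    calc ∏ q : G ⧸ H, q.out • (NH x)
        = ∏ p : (G ⧸ H) × H, (p.1.out * (p.2 : G)) • x := by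
          rw [Fintype.prod_prod_type]
          refine Finset.prod_congr rfl fun q _ => ?_
          rw [hNH]
          simp only [MonoidHom.coe_mk, OneHom.coe_mk]
          rw [Finset.smul_prod']
          exact Finset.prod_congr rfl fun h _ => (mul_smul _ _ _).symm
      _ = ∏ g : G, g • x := Fintype.prod_equiv e _ _ (fun p => rfl)
  have hy1 : ∏ q : G ⧸ H, q.out • (NH x) = 1 := by rw [hdecomp, hx]
  have hyq := hquot (NH x) ⟨x, rfl⟩ hy1
  -- closure of the quotient generators maps into the image of closure S
  have hle : Subgroup.closure
      {z : M | ∃ (g : G) (m : M),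
        z = g • (∏ h : H, (h : G) • m) / ∏ h : H, (h : G) • m} ≤
      (Subgroup.closure S).map NH := by
    rw [Subgroup.closure_le]
    rintro z ⟨g, m, rfl⟩
    refine ⟨g • m / m, Subgroup.subset_closure ⟨g, m, rfl⟩, ?_⟩
    rw [map_div]
    congr 1
    show ∏ h : H, (h : G) • (g • m) = g • (∏ h : H, (h : G) • m)
    exact (norm_smul_comm H g m).symm
  obtain ⟨w, hw, hwy⟩ := hle hyq
  have hz : NH (x / w) = 1 := by rw [map_div, hwy, div_self']
  obtain ⟨g, m, hgm⟩ := ker_norm H hH1 (x / w) hz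
  have hxw : x = (x / w) * w := by simp
  rw [hxw]
  exact Subgroup.mul_mem _ (Subgroup.subset_closure ⟨g, m, hgm⟩) hw
end

section
/- Let G be a finite group, H a normal cyclic subgroup such that ker(N_H) = I_H M for the G-module M. Then H^{-1}(G, M) = 1 if and only if H^{-1}(G/H, N_H(M)) = 1. -/
open Finset

set_option linter.unusedSectionVars false

section
variable {G M : Type*} [Group G] [Fintype G] [CommGroup M] [MulDistribMulAction G M]

/-- Norm map for a finite subgroup, as a monoid hom. -/
def NHom (H : Subgroup G) [Fintype H] : M →* M where
  toFun x := ∏ h : H, (h : G) • x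
  map_one' := by simp
  map_mul' a b := by simp [smul_mul', Finset.prod_mul_distrib]

lemma NHom_apply (H : Subgroup G) [Fintype H] (x : M) :
    NHom H x = ∏ h : H, (h : G) • x := rfl

lemma NHom_smul (H : Subgroup G) [H.Normal] [Fintype H] (g : G) (m : M) :
    NHom H (g • m) = g • NHom H m := by
  rw [NHom_apply, NHom_apply, Finset.smul_prod']
  refine Fintype.prod_equiv (MulAut.conjNormal g⁻¹).toEquiv _ _ fun h => ?_
  simp [← mul_smul, MulAut.conjNormal_apply, mul_assoc]

/-- Decomposition `N_G = N_{G/H} ∘ N_H`. -/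
lemma NG_eq (H : Subgroup G) [H.Normal] [Fintype H] [Fintype (G ⧸ H)] (x : M) :
    ∏ g : G, g • x = ∏ q : G ⧸ H, q.out • NHom H x := by
  have key : ∀ q : G ⧸ H, q.out • NHom H x = ∏ h : H, (q.out * (h : G)) • x := by
    intro q
    rw [NHom_apply, Finset.smul_prod']
    simp [mul_smul]
  simp_rw [key]
  rw [← Fintype.prod_prod_type']
  let e : (G ⧸ H) × H ≃ G :=
    { toFun := fun p => p.1.out * (p.2 : G)
      invFun := fun g => (QuotientGroup.mk g, ⟨(QuotientGroup.mk g : G ⧸ H).out⁻¹ * g,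
        QuotientGroup.eq.mp (QuotientGroup.out_eq' (QuotientGroup.mk g))⟩)
      left_inv := fun p => by
        have h1 : (QuotientGroup.mk (p.1.out * (p.2 : G)) : G ⧸ H) = p.1 := by
          rw [QuotientGroup.mk_mul, (QuotientGroup.eq_one_iff _).2 p.2.2, mul_one,
            QuotientGroup.out_eq']
        refine Prod.ext h1 (Subtype.ext ?_)
        simp [h1]
      right_inv := fun g => by simp }
  exact (Fintype.prod_equiv e _ _ fun p => rfl).symm

end

/-- Let `H` be a normal cyclic subgroup of the finite group `G` such that `ker N_H = I_H M`
for the `G`-module `M`. Then `H^{-1}(G, M) = 1` if and only if `H^{-1}(G/H, N_H(M)) = 1`. -/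
theorem stmt5 {G M : Type*} [Group G] [Fintype G] [CommGroup M] [MulDistribMulAction G M]
    (H : Subgroup G) [H.Normal] [IsCyclic H] [Fintype H] [Fintype (G ⧸ H)]
    (hker : ∀ x : M, ∏ h : H, (h : G) • x = 1 ↔
      x ∈ Subgroup.closure {y : M | ∃ (h : H) (m : M), y = (h : G) • m / m}) :
    (∀ x : M, ∏ g : G, g • x = 1 →
        x ∈ Subgroup.closure {y : M | ∃ (g : G) (m : M), y = g • m / m}) ↔
    (∀ y : M, (∃ x : M, y = ∏ h : H, (h : G) • x) →
      (∏ q : G ⧸ H, q.out • y = 1) →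
      y ∈ Subgroup.closure
        {z : M | ∃ (g : G) (m : M),
          z = g • (∏ h : H, (h : G) • m) / ∏ h : H, (h : G) • m}) := by
  set S : Set M := {y : M | ∃ (g : G) (m : M), y = g • m / m} with hS
  set T : Set M := {z : M | ∃ (g : G) (m : M),
      z = g • (∏ h : H, (h : G) • m) / ∏ h : H, (h : G) • m} with hT
  have himg : ∀ z ∈ S, NHom H z ∈ Subgroup.closure T := by
    rintro z ⟨g, m, rfl⟩
    exact Subgroup.subset_closure ⟨g, m, by rw [map_div, NHom_smul, NHom_apply]⟩
  constructor
  · intro hG y hy hNy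
    obtain ⟨x, rfl⟩ := hy
    have hx : ∏ g : G, g • x = 1 := by rw [NG_eq H x]; exact hNy
    have h2 : NHom H x ∈ (Subgroup.closure S).map (NHom H) :=
      Subgroup.mem_map_of_mem _ (hG x hx)
    rw [MonoidHom.map_closure] at h2
    have h3 : Subgroup.closure ((NHom H) '' S) ≤ Subgroup.closure T :=
      (Subgroup.closure_le _).2 (by rintro _ ⟨z, hz, rfl⟩; exact himg z hz)
    exact h3 h2
  · intro hQ x hx
    have h1 : ∏ q : G ⧸ H, q.out • NHom H x = 1 := (NG_eq H x).symm.trans hx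
    have hy := hQ (NHom H x) ⟨x, rfl⟩ h1
    have h3 : Subgroup.closure T ≤ (Subgroup.closure S).map (NHom H) := by
      rw [Subgroup.closure_le]
      rintro _ ⟨g, m, rfl⟩
      exact ⟨g • m / m, Subgroup.subset_closure ⟨g, m, rfl⟩,
        by rw [map_div, NHom_smul, NHom_apply]⟩
    obtain ⟨z, hz, hzx⟩ := h3 hy
    have h4 : NHom H (x / z) = 1 := by rw [map_div, hzx, div_self']
    have h5 := (hker (x / z)).1 h4
    have h6 : Subgroup.closure {y : M | ∃ (h : H) (m : M), y = (h : G) • m / m} ≤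
        Subgroup.closure S := by
      rw [Subgroup.closure_le]
      rintro _ ⟨h, m, rfl⟩
      exact Subgroup.subset_closure ⟨h, m, rfl⟩
    simpa using mul_mem (h6 h5) hz
end

section
/- Let L/K be a cyclic unramified (at all finite places) extension of number fields with Galois group G = ⟨g⟩. The map φ_g sending the class [I] ∈ ker(Cl(K) → Cl(L)) to the class of g(y)/y in H^{-1}(G, E_L), where y ∈ L^* is any generator of the (principal) extension of I to L, is a well-defined group homomorphism. -/
/-!
The ideal `I 𝓞_L` is stable under `G`, so `g(y)` and `y` generate the same ideal and `g(y) = u y`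
for a unit `u`. If `(a) I₁ = (b) I₂` with `a, b ∈ 𝓞_K`, then `b y₂ = a y₁ w` for a unit `w`, and
since `g` fixes `a` and `b` this gives `u₂ w = u₁ g(w)`; the same computation with `y₃ = y₁ y₂ w`
gives multiplicativity. Finally the norm of `u` is `∏ σ(g y) / ∏ σ(y) = 1`, since `σ ↦ σ g`
permutes `G`.
-/

open NumberField
open scoped nonZeroDivisors

variable (K L : Type*) [Field K] [NumberField K] [Field L] [NumberField L]
  [Algebra K L] [IsGalois K L]

/-- The action of `σ ∈ Gal(L/K)` on the unit group `E_L = (𝓞 L)ˣ`. -/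
noncomputable def unitAct (σ : L ≃ₐ[K] L) : (𝓞 L)ˣ →* (𝓞 L)ˣ :=
  Units.map (galRestrict (𝓞 K) K L (𝓞 L) σ : (𝓞 L) →* (𝓞 L))

/-- The norm map `N_G : E_L → E_L`, `u ↦ ∏_{σ ∈ Gal(L/K)} σ(u)`. -/
noncomputable def normE : (𝓞 L)ˣ →* (𝓞 L)ˣ :=
  MonoidHom.mk' (fun x => ∏ σ : L ≃ₐ[K] L, unitAct K L σ x)
    (fun a b => by simp [map_mul, Finset.prod_mul_distrib])

/-- The augmentation subgroup `I_G E_L`, generated by the `σ(u)/u`. -/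
noncomputable def augE : Subgroup (𝓞 L)ˣ :=
  Subgroup.closure {u : (𝓞 L)ˣ | ∃ (σ : L ≃ₐ[K] L) (x : (𝓞 L)ˣ), u = unitAct K L σ x / x}

theorem mul_map_eq_mul_of_map_eq_mul {R : Type*} [CommMonoidWithZero R] [IsCancelMulZero R]
    (σ : R →* R) {y w u v : R} (hy : y ≠ 0) (hu : σ y = u * y) (hv : σ (y * w) = v * (y * w)) :
    u * σ w = v * w := by
  refine mul_right_cancel₀ hy ?_
  calc u * σ w * y = σ (y * w) := by rw [map_mul, hu, mul_right_comm]
    _ = v * w * y := by rw [hv, mul_left_comm, mul_comm]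

theorem prod_smul_eq_one_of_smul_eq_mul {G M : Type*} [Group G] [Fintype G]
    [CommRing M] [IsDomain M] [MulSemiringAction G M] (g : G) {t v : M} (ht : t ≠ 0)
    (h : g • t = v * t) : ∏ σ : G, σ • v = 1 := by
  have hprod : (∏ σ : G, σ • t) ≠ 0 :=
    Finset.prod_ne_zero_iff.mpr fun σ _ => (smul_ne_zero_iff_ne σ).mpr ht
  refine mul_right_cancel₀ hprod ?_
  calc (∏ σ : G, σ • v) * ∏ σ : G, σ • t = ∏ σ : G, (σ * g) • t := by
        simp only [← Finset.prod_mul_distrib, ← smul_mul', mul_smul, h]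
    _ = 1 * ∏ σ : G, σ • t := by
      rw [one_mul]; exact Fintype.prod_equiv (Equiv.mulRight g) _ _ fun _ => rfl

section IdealExtension

variable {A B : Type*} [CommRing A] [CommRing B] [Algebra A B]

theorem Ideal.map_algHom_map_algebraMap (σ : B →ₐ[A] B) (I : Ideal A) :
    (I.map (algebraMap A B)).map σ = I.map (algebraMap A B) := by
  rw [← Ideal.map_coe σ, Ideal.map_map, AlgHom.comp_algebraMap]

theorem exists_unit_algEquiv_apply_eq_mul [IsDomain B] (σ : B ≃ₐ[A] B) {I : Ideal A} {y : B}
    (hy : I.map (algebraMap A B) = Ideal.span {y}) : ∃ u : Bˣ, σ y = u * y := by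
  have hstable := Ideal.map_algHom_map_algebraMap (σ : B →ₐ[A] B) I
  rw [hy, Ideal.map_span, Set.image_singleton] at hstable
  obtain ⟨u, hu⟩ := Ideal.span_singleton_eq_span_singleton.mp hstable.symm
  exact ⟨u, by rw [mul_comm]; exact hu.symm⟩

theorem ne_zero_of_map_eq_span_singleton [Nontrivial A] [FaithfulSMul A B] {I : Ideal A}
    (hI : I ∈ (Ideal A)⁰) {y : B} (hy : I.map (algebraMap A B) = Ideal.span {y}) : y ≠ 0 := by
  rintro rfl
  rw [Ideal.span_singleton_eq_bot.mpr rfl,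
    Ideal.map_eq_bot_iff_of_injective (FaithfulSMul.algebraMap_injective A B)] at hy
  exact nonZeroDivisors.ne_zero hI hy

theorem Ideal.map_mul_eq_span_singleton_mul {I J : Ideal A} {x y : B}
    (hI : I.map (algebraMap A B) = Ideal.span {x}) (hJ : J.map (algebraMap A B) = Ideal.span {y}) :
    (I * J).map (algebraMap A B) = Ideal.span {x * y} := by
  rw [Ideal.map_mul, hI, hJ, Ideal.span_singleton_mul_span_singleton]

end IdealExtension

theorem galRestrict_apply_eq_smul {F E : Type*} [Field F] [NumberField F] [Field E]
    [NumberField E] [Algebra F E] (σ : E ≃ₐ[F] E) (x : 𝓞 E) :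
    galRestrict (𝓞 F) F E (𝓞 E) σ x = σ • x := by
  apply FaithfulSMul.algebraMap_injective (𝓞 E) E
  rw [algebraMap_galRestrict_apply]
  rfl

section UnitCohomology

variable {F E : Type*} [Field F] [NumberField F] [Field E] [Algebra F E] [IsGalois F E]

theorem div_mem_augE_of_galRestrict_eq_mul (σ : E ≃ₐ[F] E) {y : 𝓞 E} {u v w : (𝓞 E)ˣ}
    (hy : y ≠ 0) (hu : galRestrict (𝓞 F) F E (𝓞 E) σ y = u * y)
    (hv : galRestrict (𝓞 F) F E (𝓞 E) σ (y * w) = v * (y * w)) : v / u ∈ augE F E := by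
  have hcocycle : u * unitAct F E σ w = v * w :=
    Units.ext (mul_map_eq_mul_of_map_eq_mul (galRestrict (𝓞 F) F E (𝓞 E) σ : 𝓞 E →* 𝓞 E) hy hu hv)
  rw [show v / u = unitAct F E σ w / w by rw [div_eq_div_iff_mul_eq_mul, ← hcocycle, mul_comm]]
  exact Subgroup.subset_closure ⟨σ, w, rfl⟩

theorem div_mem_augE_of_mk0_eq (g : E ≃ₐ[F] E) {I₁ I₂ : (Ideal (𝓞 F))⁰} {y₁ y₂ : 𝓞 E}
    {u₁ u₂ : (𝓞 E)ˣ}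
    (hy₁ : Ideal.map (algebraMap (𝓞 F) (𝓞 E)) (I₁ : Ideal (𝓞 F)) = Ideal.span {y₁})
    (hy₂ : Ideal.map (algebraMap (𝓞 F) (𝓞 E)) (I₂ : Ideal (𝓞 F)) = Ideal.span {y₂})
    (hu₁ : galRestrict (𝓞 F) F E (𝓞 E) g y₁ = u₁ * y₁)
    (hu₂ : galRestrict (𝓞 F) F E (𝓞 E) g y₂ = u₂ * y₂)
    (hcls : ClassGroup.mk0 I₁ = ClassGroup.mk0 I₂) : u₁ / u₂ ∈ augE F E := by
  obtain ⟨a, b, ha, -, hab⟩ := ClassGroup.mk0_eq_mk0_iff.mp hcls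
  have hspan (c : 𝓞 F) : (Ideal.span {c}).map (algebraMap (𝓞 F) (𝓞 E)) =
      Ideal.span {algebraMap (𝓞 F) (𝓞 E) c} := by
    rw [Ideal.map_span, Set.image_singleton]
  have hscale (c : 𝓞 F) {y : 𝓞 E} {u : (𝓞 E)ˣ} (h : galRestrict (𝓞 F) F E (𝓞 E) g y = u * y) :
      galRestrict (𝓞 F) F E (𝓞 E) g (algebraMap _ _ c * y) = u * (algebraMap _ _ c * y) := by
    rw [map_mul, AlgEquiv.commutes, h, mul_left_comm]
  have hab' := congrArg (Ideal.map (algebraMap (𝓞 F) (𝓞 E))) hab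
  rw [Ideal.map_mul_eq_span_singleton_mul (hspan a) hy₁,
    Ideal.map_mul_eq_span_singleton_mul (hspan b) hy₂] at hab'
  obtain ⟨w, hw⟩ := Ideal.span_singleton_eq_span_singleton.mp hab'
  have hv := hscale b hu₂
  rw [← hw] at hv
  have ha' : algebraMap (𝓞 F) (𝓞 E) a ≠ 0 :=
    (map_ne_zero_iff _ (FaithfulSMul.algebraMap_injective _ _)).mpr ha
  have hdiv := div_mem_augE_of_galRestrict_eq_mul g
    (mul_ne_zero ha' (ne_zero_of_map_eq_span_singleton I₁.2 hy₁)) (hscale a hu₁) hv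
  simpa only [inv_div] using (augE F E).inv_mem hdiv

theorem val_normE [NumberField E] (u : (𝓞 E)ˣ) :
    (normE F E u : 𝓞 E) = ∏ σ : E ≃ₐ[F] E, σ • (u : 𝓞 E) := by
  simp [normE, unitAct, galRestrict_apply_eq_smul]

theorem mem_ker_normE_of_galRestrict_eq_mul [NumberField E] (σ : E ≃ₐ[F] E) {y : 𝓞 E}
    {u : (𝓞 E)ˣ} (hy : y ≠ 0) (hu : galRestrict (𝓞 F) F E (𝓞 E) σ y = u * y) :
    u ∈ (normE F E).ker := by
  rw [galRestrict_apply_eq_smul] at hu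
  rw [MonoidHom.mem_ker, Units.ext_iff, val_normE, Units.val_one]
  exact prod_smul_eq_one_of_smul_eq_mul σ hy hu

end UnitCohomology

theorem stmt14
    (g : L ≃ₐ[K] L)
    (I₁ I₂ : (Ideal (𝓞 K))⁰) (y₁ y₂ y₃ : 𝓞 L) (u₁ u₂ u₃ : (𝓞 L)ˣ)
    (hy₁ : Ideal.map (algebraMap (𝓞 K) (𝓞 L)) (I₁ : Ideal (𝓞 K)) = Ideal.span {y₁})
    (hy₂ : Ideal.map (algebraMap (𝓞 K) (𝓞 L)) (I₂ : Ideal (𝓞 K)) = Ideal.span {y₂})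
    (hy₃ : Ideal.map (algebraMap (𝓞 K) (𝓞 L)) ((I₁ * I₂ : (Ideal (𝓞 K))⁰) : Ideal (𝓞 K)) =
      Ideal.span {y₃})
    (hu₁ : galRestrict (𝓞 K) K L (𝓞 L) g y₁ = u₁ * y₁)
    (hu₂ : galRestrict (𝓞 K) K L (𝓞 L) g y₂ = u₂ * y₂)
    (hu₃ : galRestrict (𝓞 K) K L (𝓞 L) g y₃ = u₃ * y₃) :
    -- `g(y)/y` always makes sense as a unit:
    (∀ (I : (Ideal (𝓞 K))⁰) (y : 𝓞 L),
      Ideal.map (algebraMap (𝓞 K) (𝓞 L)) (I : Ideal (𝓞 K)) = Ideal.span {y} →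
      ∃ u : (𝓞 L)ˣ, galRestrict (𝓞 K) K L (𝓞 L) g y = u * y) ∧
    -- the value lies in the kernel of the norm:
    u₁ ∈ (normE K L).ker ∧
    -- the class modulo `I_G E_L` only depends on the ideal class:
    (ClassGroup.mk0 I₁ = ClassGroup.mk0 I₂ → u₁ / u₂ ∈ augE K L) ∧
    -- multiplicativity:
    u₃ / (u₁ * u₂) ∈ augE K L := by
  have hy₁0 := ne_zero_of_map_eq_span_singleton I₁.2 hy₁
  have hy₂0 := ne_zero_of_map_eq_span_singleton I₂.2 hy₂
  refine ⟨fun I y hy => exists_unit_algEquiv_apply_eq_mul _ hy,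
    mem_ker_normE_of_galRestrict_eq_mul g hy₁0 hu₁,
    fun hcls => div_mem_augE_of_mk0_eq g hy₁ hy₂ hu₁ hu₂ hcls, ?_⟩
  obtain ⟨w, hw⟩ := Ideal.span_singleton_eq_span_singleton.mp
    ((Ideal.map_mul_eq_span_singleton_mul hy₁ hy₂).symm.trans hy₃)
  rw [← hw] at hu₃
  have hu₁₂ : galRestrict (𝓞 K) K L (𝓞 L) g (y₁ * y₂) = (u₁ * u₂ : (𝓞 L)ˣ) * (y₁ * y₂) := by
    rw [map_mul, hu₁, hu₂, Units.val_mul, mul_mul_mul_comm]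
  exact div_mem_augE_of_galRestrict_eq_mul g (mul_ne_zero hy₁0 hy₂0) hu₁₂ hu₃
end

section
/- Let G be a finite group, H ≤ G normal with ker(N_H) = I_H M on the G-module M. If z ∈ M satisfies N_H(z) ∈ I_{G/H} N_H(M), then z ∈ I_G M. -/
/-- If `H ≤ G` is normal with `ker N_H = I_H M` on the `G`-module `M`, and `z ∈ M` satisfies
`N_H(z) ∈ I_{G/H} N_H(M)`, then `z ∈ I_G M`. -/
theorem stmt18 {G M : Type*} [Group G] [Fintype G] [CommGroup M] [MulDistribMulAction G M]
    (H : Subgroup G) [H.Normal] [Fintype H]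
    (hker : ∀ x : M, ∏ h : H, (h : G) • x = 1 →
      x ∈ Subgroup.closure {y : M | ∃ (h : H) (m : M), y = (h : G) • m / m})
    (z : M)
    (hz : (∏ h : H, (h : G) • z) ∈ Subgroup.closure
      {y : M | ∃ (g : G) (w : M),
        y = g • (∏ h : H, (h : G) • w) / ∏ h : H, (h : G) • w}) :
    z ∈ Subgroup.closure {y : M | ∃ (g : G) (m : M), y = g • m / m} := by
  set IG := Subgroup.closure {y : M | ∃ (g : G) (m : M), y = g • m / m} with hIG
  let N : M →* M :=
    { toFun := fun x => ∏ h : H, (h : G) • x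
      map_one' := by simp
      map_mul' := fun x y => by simp [smul_mul', Finset.prod_mul_distrib] }
  have hNdef : ∀ x : M, N x = ∏ h : H, (h : G) • x := fun _ => rfl
  have hN : ∀ (g : G) (w : M), g • N w = N (g • w) := by
    intro g w
    let e : H ≃ H :=
      { toFun := fun h => ⟨g * h * g⁻¹, Subgroup.Normal.conj_mem ‹H.Normal› h h.2 g⟩
        invFun := fun h => ⟨g⁻¹ * h * g, by
          simpa using Subgroup.Normal.conj_mem ‹H.Normal› h h.2 g⁻¹⟩
        left_inv := fun h => by ext; simp [mul_assoc]
        right_inv := fun h => by ext; simp [mul_assoc] }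
    calc g • N w = ∏ h : H, (g * (h : G)) • w := by
          rw [hNdef, Finset.smul_prod']
          exact Finset.prod_congr rfl fun h _ => (mul_smul g (h : G) w).symm
      _ = ∏ h : H, ((h : G) * g) • w := by
          refine Fintype.prod_equiv e _ _ fun h => ?_
          show (g * (h : G)) • w = (((e h : H) : G) * g) • w
          congr 1
          show g * (h : G) = (g * (h : G) * g⁻¹) * g
          group
      _ = N (g • w) := by
          rw [hNdef]
          exact Finset.prod_congr rfl fun h _ => mul_smul (h : G) g w
  have h1 : Subgroup.closure
      {y : M | ∃ (g : G) (w : M),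
        y = g • (∏ h : H, (h : G) • w) / ∏ h : H, (h : G) • w} ≤ IG.map N := by
    refine Subgroup.closure_le _ |>.mpr ?_
    rintro y ⟨g, w, rfl⟩
    refine ⟨g • w / w, Subgroup.subset_closure ⟨g, w, rfl⟩, ?_⟩
    rw [map_div, ← hN g w]
    rfl
  obtain ⟨t, ht, hNt⟩ := h1 hz
  have hzt : N (z / t) = 1 := by
    rw [map_div]
    have : N z = ∏ h : H, (h : G) • z := rfl
    rw [this, hNt, div_self']
  have h2 := hker (z / t) hzt
  have h3 : Subgroup.closure {y : M | ∃ (h : H) (m : M), y = (h : G) • m / m} ≤ IG := by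
    refine Subgroup.closure_le _ |>.mpr ?_
    rintro y ⟨h, m, rfl⟩
    exact Subgroup.subset_closure ⟨(h : G), m, rfl⟩
  have hztT : z = z / t * t := (div_mul_cancel z t).symm
  rw [hztT]
  exact mul_mem (h3 h2) ht
end
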